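/- Let j < k be natural numbers, e_j : Ω → ℝⁿ and v : Ω → ℝ^l zero-mean square-integrable random vectors, and v'_ℓ : Ω → ℝⁿ (ℓ = j,…,k−1) zero-mean square-integrable random vectors. Let Φ_ℓ (n×n) be real matrices, define Φ_{k|i} = Φ_{k−1}⋯Φ_i for i ≤ k−1 and Φ_{k|k} = I, and set e_k = Φ_{k|j} e_j + Σ_{ℓ=j}^{k−1} Φ_{k|ℓ+1} v'_ℓ. Suppose E[v'_ℓ e_jᵀ] = 0 and E[v'_ℓ vᵀ] = 0 for all ℓ with j < ℓ ≤ k−1, and E[v'_j e_jᵀ] = N, E[v'_j vᵀ] = N', E[e_j e_jᵀ] = P, E[e_j vᵀ] = K for given matrices N, N', P, K. Then E[e_k e_jᵀ] = Φ_{k|j+1}(Φ_j P + N) and E[e_k vᵀ] = Φ_{k|j+1}(Φ_j K + N') (cross-covariance propagation along the filter error recursion, used in the proof of Theorem 1). -/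

import Mathlib

/-!
Cross-covariance is linear in its first argument on square-integrable random vectors (by Hölder
every entry `X_i Y_q` is integrable), so
`E[e_k Yᵀ] = Φ_{k|j} E[e_j Yᵀ] + Σ_{ℓ=j}^{k-1} Φ_{k|ℓ+1} E[v'_ℓ Yᵀ]` for any square-integrable `Y`.
For `Y = e_j` or `Y = v` only the term `ℓ = j` of the sum survives, and `Φ_{k|j} = Φ_{k|j+1} Φ_j`.
-/

open MeasureTheory Matrix
open scoped ProbabilityTheory

/-- Cross-covariance matrix `E[X Yᵀ]` of two (zero-mean) random vectors. -/
noncomputable def crossCov {Ω : Type*} [MeasureSpace Ω]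
    {a b : ℕ} (X : Ω → Fin a → ℝ) (Y : Ω → Fin b → ℝ) : Matrix (Fin a) (Fin b) ℝ :=
  Matrix.of fun i j => ∫ ω, X ω i * Y ω j

/-- `chain Φ i k = Φ_{k-1} ⋯ Φ_i` (equal to `1` when `k ≤ i`), i.e. the state-transition
matrix `Φ_{k|i}` of the error system. -/
def chain {n : ℕ} (Φ : ℕ → Matrix (Fin n) (Fin n) ℝ) (i : ℕ) : ℕ → Matrix (Fin n) (Fin n) ℝ
  | 0 => 1
  | m + 1 => if i ≤ m then Φ m * chain Φ i m else 1

lemma memLp_mulVec_apply {Ω m k : Type*} [MeasurableSpace Ω] [Fintype k] {μ : Measure Ω}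
    {p : ENNReal} (A : Matrix m k ℝ) {X : Ω → k → ℝ} (hX : ∀ q, MemLp (fun ω => X ω q) p μ)
    (i : m) : MemLp (fun ω => (A *ᵥ X ω) i) p μ :=
  memLp_finsetSum _ fun q _ => (hX q).const_mul (A i q)

section CrossCov

variable {Ω : Type*} [MeasureSpace Ω] {a b c : ℕ} {Y : Ω → Fin b → ℝ}

lemma crossCov_add_left {X X' : Ω → Fin a → ℝ} (hX : ∀ i, MemLp (fun ω => X ω i) 2 ℙ)
    (hX' : ∀ i, MemLp (fun ω => X' ω i) 2 ℙ) (hY : ∀ q, MemLp (fun ω => Y ω q) 2 ℙ) :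
    crossCov (fun ω => X ω + X' ω) Y = crossCov X Y + crossCov X' Y := by
  ext i q
  simp only [crossCov, Matrix.of_apply, Matrix.add_apply, Pi.add_apply, add_mul]
  exact integral_add ((hX i).integrable_mul (hY q)) ((hX' i).integrable_mul (hY q))

lemma crossCov_sum_left {ι : Type*} (s : Finset ι) {X : ι → Ω → Fin a → ℝ}
    (hX : ∀ ℓ ∈ s, ∀ i, MemLp (fun ω => X ℓ ω i) 2 ℙ) (hY : ∀ q, MemLp (fun ω => Y ω q) 2 ℙ) :
    crossCov (fun ω => ∑ ℓ ∈ s, X ℓ ω) Y = ∑ ℓ ∈ s, crossCov (X ℓ) Y := by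
  ext i q
  simp only [crossCov, Matrix.of_apply, Matrix.sum_apply, Finset.sum_apply, Finset.sum_mul]
  exact integral_finsetSum s fun ℓ hℓ => (hX ℓ hℓ i).integrable_mul (hY q)

lemma crossCov_mulVec_left (A : Matrix (Fin a) (Fin c) ℝ) {X : Ω → Fin c → ℝ}
    (hX : ∀ p, MemLp (fun ω => X ω p) 2 ℙ) (hY : ∀ q, MemLp (fun ω => Y ω q) 2 ℙ) :
    crossCov (fun ω => A *ᵥ X ω) Y = A * crossCov X Y := by
  ext i q
  simp only [crossCov, Matrix.mul_apply, Matrix.of_apply, Matrix.mulVec, dotProduct,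
    Finset.sum_mul, mul_assoc]
  rw [integral_finsetSum _ fun p _ => ?_]
  · simp only [integral_const_mul]
  · exact ((hX p).integrable_mul (hY q)).const_mul (A i p)

end CrossCov

section Chain

variable {n : ℕ} (Φ : ℕ → Matrix (Fin n) (Fin n) ℝ)

lemma chain_eq_one_of_le {i m : ℕ} (h : m ≤ i) : chain Φ i m = 1 := by
  cases m with
  | zero => rfl
  | succ m => simp [chain, Nat.not_le.mpr h]

lemma chain_eq_chain_succ_mul {i k : ℕ} (h : i < k) : chain Φ i k = chain Φ (i + 1) k * Φ i := by
  induction k with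
  | zero => omega
  | succ m ih =>
    rcases Nat.lt_or_ge i m with him | him
    · simp only [chain, if_pos him.le, if_pos (show i + 1 ≤ m from him), ih him, Matrix.mul_assoc]
    · obtain rfl : i = m := by omega
      simp [chain, chain_eq_one_of_le Φ le_rfl]

end Chain

lemma crossCov_errorRecursion {Ω : Type*} [MeasureSpace Ω] {n b : ℕ} {j k : ℕ} (hjk : j < k)
    (Φ : ℕ → Matrix (Fin n) (Fin n) ℝ) {ej : Ω → Fin n → ℝ} {v' : ℕ → Ω → Fin n → ℝ}
    {Y : Ω → Fin b → ℝ} (hej : ∀ i, MemLp (fun ω => ej ω i) 2 ℙ)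
    (hv' : ∀ ℓ, j ≤ ℓ → ℓ < k → ∀ i, MemLp (fun ω => v' ℓ ω i) 2 ℙ)
    (hY : ∀ q, MemLp (fun ω => Y ω q) 2 ℙ)
    (hv'Y : ∀ ℓ, j < ℓ → ℓ < k → crossCov (v' ℓ) Y = 0) :
    crossCov (fun ω => chain Φ j k *ᵥ ej ω + ∑ ℓ ∈ Finset.Ico j k, chain Φ (ℓ + 1) k *ᵥ v' ℓ ω) Y
      = chain Φ (j + 1) k * (Φ j * crossCov ej Y + crossCov (v' j) Y) := by
  have hv'Ico : ∀ ℓ ∈ Finset.Ico j k, ∀ i, MemLp (fun ω => v' ℓ ω i) 2 ℙ := fun ℓ hℓ =>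
    hv' ℓ (Finset.mem_Ico.1 hℓ).1 (Finset.mem_Ico.1 hℓ).2
  have hsum : ∑ ℓ ∈ Finset.Ico j k, chain Φ (ℓ + 1) k * crossCov (v' ℓ) Y
      = chain Φ (j + 1) k * crossCov (v' j) Y := by
    refine Finset.sum_eq_single_of_mem j (Finset.mem_Ico.2 ⟨le_rfl, hjk⟩) fun ℓ hℓ hne => ?_
    rw [hv'Y ℓ (lt_of_le_of_ne (Finset.mem_Ico.1 hℓ).1 (Ne.symm hne)) (Finset.mem_Ico.1 hℓ).2,
      Matrix.mul_zero]
  have hnoise : ∀ i, MemLp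
      (fun ω => (∑ ℓ ∈ Finset.Ico j k, chain Φ (ℓ + 1) k *ᵥ v' ℓ ω) i) 2 ℙ := fun i => by
    simpa only [Finset.sum_apply] using
      memLp_finsetSum _ fun ℓ hℓ => memLp_mulVec_apply _ (hv'Ico ℓ hℓ) i
  rw [crossCov_add_left (memLp_mulVec_apply _ hej) hnoise hY,
    crossCov_mulVec_left _ hej hY,
    crossCov_sum_left _ (fun ℓ hℓ => memLp_mulVec_apply _ (hv'Ico ℓ hℓ)) hY,
    Finset.sum_congr rfl fun ℓ hℓ => crossCov_mulVec_left _ (hv'Ico ℓ hℓ) hY, hsum,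
    chain_eq_chain_succ_mul Φ hjk, Matrix.mul_add, Matrix.mul_assoc]

theorem crossCov_propagation_general
    {Ω : Type*} [MeasureSpace Ω]
    {n l : ℕ} (j k : ℕ) (hjk : j < k)
    (ej : Ω → Fin n → ℝ) (v : Ω → Fin l → ℝ) (v' : ℕ → Ω → Fin n → ℝ)
    (hej_meas : ∀ i, MemLp (fun ω => ej ω i) 2 ℙ)
    (hv_meas : ∀ i, MemLp (fun ω => v ω i) 2 ℙ)
    (hv'_meas : ∀ ℓ, j ≤ ℓ → ℓ < k → ∀ i, MemLp (fun ω => v' ℓ ω i) 2 ℙ)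
    (Φ : ℕ → Matrix (Fin n) (Fin n) ℝ)
    (ek : Ω → Fin n → ℝ)
    (hek : ek = fun ω => chain Φ j k *ᵥ ej ω + ∑ ℓ ∈ Finset.Ico j k, chain Φ (ℓ + 1) k *ᵥ v' ℓ ω)
    (N P : Matrix (Fin n) (Fin n) ℝ)
    (N' K : Matrix (Fin n) (Fin l) ℝ)
    (hv'ej : ∀ ℓ, j < ℓ → ℓ < k → crossCov (v' ℓ) ej = 0)
    (hv'v : ∀ ℓ, j < ℓ → ℓ < k → crossCov (v' ℓ) v = 0)
    (hv'jej : crossCov (v' j) ej = N)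
    (hv'jv : crossCov (v' j) v = N')
    (hejej : crossCov ej ej = P)
    (hejv : crossCov ej v = K) :
    crossCov ek ej = chain Φ (j + 1) k * (Φ j * P + N) ∧
      crossCov ek v = chain Φ (j + 1) k * (Φ j * K + N') := by
  subst hek hv'jej hv'jv hejej hejv
  exact ⟨crossCov_errorRecursion hjk Φ hej_meas hv'_meas hej_meas hv'ej,
    crossCov_errorRecursion hjk Φ hej_meas hv'_meas hv_meas hv'v⟩

/-- Cross-covariance propagation along the filter error recursion
`e_k = Φ_{k|j} e_j + Σ_{ℓ=j}^{k−1} Φ_{k|ℓ+1} v'_ℓ` (used in the proof of Theorem 1):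
`E[e_k e_jᵀ] = Φ_{k|j+1}(Φ_j P + N)` and `E[e_k vᵀ] = Φ_{k|j+1}(Φ_j K + N')`. -/
theorem crossCov_propagation
    {Ω : Type*} [MeasureSpace Ω] [IsProbabilityMeasure (ℙ : Measure Ω)]
    {n l : ℕ} (j k : ℕ) (hjk : j < k)
    (ej : Ω → Fin n → ℝ) (v : Ω → Fin l → ℝ) (v' : ℕ → Ω → Fin n → ℝ)
    (hej_meas : ∀ i, MemLp (fun ω => ej ω i) 2 ℙ)
    (hv_meas : ∀ i, MemLp (fun ω => v ω i) 2 ℙ)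
    (hv'_meas : ∀ ℓ, j ≤ ℓ → ℓ < k → ∀ i, MemLp (fun ω => v' ℓ ω i) 2 ℙ)
    (hej_mean : ∀ i, ∫ ω, ej ω i = 0)
    (hv_mean : ∀ i, ∫ ω, v ω i = 0)
    (hv'_mean : ∀ ℓ, j ≤ ℓ → ℓ < k → ∀ i, ∫ ω, v' ℓ ω i = 0)
    (Φ : ℕ → Matrix (Fin n) (Fin n) ℝ)
    (ek : Ω → Fin n → ℝ)
    (hek : ek = fun ω => chain Φ j k *ᵥ ej ω + ∑ ℓ ∈ Finset.Ico j k, chain Φ (ℓ + 1) k *ᵥ v' ℓ ω)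
    (N P : Matrix (Fin n) (Fin n) ℝ)
    (N' K : Matrix (Fin n) (Fin l) ℝ)
    (hv'ej : ∀ ℓ, j < ℓ → ℓ < k → crossCov (v' ℓ) ej = 0)
    (hv'v : ∀ ℓ, j < ℓ → ℓ < k → crossCov (v' ℓ) v = 0)
    (hv'jej : crossCov (v' j) ej = N)
    (hv'jv : crossCov (v' j) v = N')
    (hejej : crossCov ej ej = P)
    (hejv : crossCov ej v = K) :
    crossCov ek ej = chain Φ (j + 1) k * (Φ j * P + N) ∧
      crossCov ek v = chain Φ (j + 1) k * (Φ j * K + N') :=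
  crossCov_propagation_general j k hjk ej v v' hej_meas hv_meas hv'_meas Φ ek hek N P N' K hv'ej
    hv'v hv'jej hv'jv hejej hejv
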